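/- Generalized fidelity does not decrease under projections: for subnormalized states ρ, σ and a projection Π, F(ΠρΠ, ΠσΠ) ≥ F(ρ,σ) − sqrt((1−Tr(Πρ))(1−Tr(Πσ))), where F is the generalized fidelity. In particular, combined with normalization this yields the bound used for smoothing: ‖√(ΠρΠ)√(ΠσΠ)‖₁ ≥ F(ρ,σ) − sqrt((1−Tr(Πρ))(1−Tr(Πσ))). -/

import Mathlib

open Matrix Kronecker ComplexOrder

noncomputable section

variable {n : Type*} [Fintype n] [DecidableEq n]

/-- The PSD square root `U √D Uᴴ` (Mathlib's former `Matrix.PosSemidef.sqrt`). -/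
def psdSqrtOld {A : Matrix n n ℂ} (hA : A.PosSemidef) : Matrix n n ℂ :=
  (hA.1.eigenvectorUnitary : Matrix n n ℂ) * diagonal ((↑) ∘ (√·) ∘ hA.1.eigenvalues) *
    (star (hA.1.eigenvectorUnitary : Matrix n n ℂ))

open Classical in
/-- The square root of a matrix: the PSD square root if the matrix is PSD, else 0. -/
def msqrt (A : Matrix n n ℂ) : Matrix n n ℂ :=
  if h : A.PosSemidef then psdSqrtOld h else 0

/-- The trace norm (Schatten 1-norm) of a matrix. -/
def trNorm (A : Matrix n n ℂ) : ℝ :=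
  ((psdSqrtOld (Matrix.posSemidef_conjTranspose_mul_self A)).trace).re

/-- The operator norm of a matrix, acting on the Euclidean space. -/
def opNorm (A : Matrix n n ℂ) : ℝ :=
  ‖(Matrix.toEuclideanCLM (𝕜 := ℂ) A : EuclideanSpace ℂ n →L[ℂ] EuclideanSpace ℂ n)‖

/-- A (normalized) quantum state: positive semidefinite with unit trace. -/
def IsState (ρ : Matrix n n ℂ) : Prop := ρ.PosSemidef ∧ ρ.trace = 1

/-- A subnormalized quantum state: positive semidefinite with trace at most one. -/
def IsSubState (ρ : Matrix n n ℂ) : Prop := ρ.PosSemidef ∧ (ρ.trace).re ≤ 1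

/-- Loewner (semidefinite) order: `A ≤ B` iff `B - A` is positive semidefinite. -/
def LoewnerLE (A B : Matrix n n ℂ) : Prop := (B - A).PosSemidef

/-- Fidelity `F(ρ,σ) = ‖√ρ√σ‖₁` (extended to positive operators). -/
def fid (ρ σ : Matrix n n ℂ) : ℝ := trNorm (msqrt ρ * msqrt σ)

/-- Generalized fidelity for subnormalized states. -/
def gFid (ρ σ : Matrix n n ℂ) : ℝ :=
  fid ρ σ + Real.sqrt ((1 - ρ.trace.re) * (1 - σ.trace.re))

/-- (Generalized) purified distance `P(ρ,σ) = sqrt(1 - F(ρ,σ)²)`. -/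
def pDist (ρ σ : Matrix n n ℂ) : ℝ := Real.sqrt (1 - (gFid ρ σ)^2)

/-- Generalized trace distance `δ(ρ,σ) = (‖ρ-σ‖₁ + |Tr(ρ-σ)|)/2` for subnormalized states. -/
def trDist (ρ σ : Matrix n n ℂ) : ℝ :=
  (trNorm (ρ - σ) + |(ρ.trace - σ.trace).re|) / 2

variable {α β γ : Type*} [Fintype α] [DecidableEq α] [Fintype β] [DecidableEq β]
  [Fintype γ] [DecidableEq γ]

/-- Partial trace over the second tensor factor. -/
def ptrSnd (ρ : Matrix (α × β) (α × β) ℂ) : Matrix α α ℂ :=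
  fun i j => ∑ k, ρ (i, k) (j, k)

/-- Partial trace over the first tensor factor. -/
def ptrFst (ρ : Matrix (α × β) (α × β) ℂ) : Matrix β β ℂ :=
  fun i j => ∑ k, ρ (k, i) (k, j)

/-- Partial trace over the middle factor of a tripartite system `(α × β) × γ`. -/
def ptrMid (ρ : Matrix ((α × β) × γ) ((α × β) × γ) ℂ) : Matrix (α × γ) (α × γ) ℂ :=
  fun p q => ∑ m, ρ ((p.1, m), p.2) ((q.1, m), q.2)

/-- Max-relative entropy `D_max(ρ‖σ) = inf {λ : ρ ≤ 2^λ σ}`. -/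
def Dmax (ρ σ : Matrix n n ℂ) : ℝ :=
  sInf {l : ℝ | LoewnerLE ρ (((2:ℝ) ^ l) • σ)}

open Classical in
/-- von Neumann entropy (base 2) of a matrix (0 if not Hermitian). -/
def vnEntropy (ρ : Matrix n n ℂ) : ℝ :=
  if h : ρ.IsHermitian then -∑ i, (h.eigenvalues i) * Real.logb 2 (h.eigenvalues i) else 0

/-! Write `X = √ρ √σ = W |X|` (polar decomposition), so that `‖X‖₁ = Re Tr (W† X)`, and split
`X = (√ρ Π)(√σ Π)† + (√ρ Π⊥)(√σ Π⊥)†` with `Π⊥ = 1 - Π`. Polar decompositions of `√ρ Π` and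
`√σ Π`, whose absolute values are `√(ΠρΠ)` and `√(ΠσΠ)`, turn the first term into
`Tr (C √(ΠρΠ) √(ΠσΠ))` for a contraction `C`, which is at most `‖√(ΠρΠ) √(ΠσΠ)‖₁`. Cauchy–Schwarz
bounds the second term by `√(Tr Π⊥ρ · Tr Π⊥σ)`, and `√(ab) + √(cd) ≤ √((a + c)(b + d))` absorbs
`√((1 - Tr ρ)(1 - Tr σ))`. -/

open scoped Matrix.Norms.L2Operator

namespace Matrix.IsHermitian

variable {𝕜 : Type*} [RCLike 𝕜] {A : Matrix n n 𝕜} (hA : A.IsHermitian)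

lemma cfc_mul_cfc (f g : ℝ → ℝ) : hA.cfc f * hA.cfc g = hA.cfc (f * g) := by
  simp only [IsHermitian.cfc, ← map_mul, diagonal_mul_diagonal]
  congr 2
  ext i
  simp

lemma cfc_congr {f g : ℝ → ℝ} (h : ∀ i, f (hA.eigenvalues i) = g (hA.eigenvalues i)) :
    hA.cfc f = hA.cfc g := by
  simp only [IsHermitian.cfc, Function.comp_def, h]

lemma cfc_id : hA.cfc id = A := hA.spectral_theorem.symm

lemma cfc_mul_self (f : ℝ → ℝ) : hA.cfc f * A = hA.cfc (f * id) := by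
  rw [← hA.cfc_mul_cfc, hA.cfc_id]

lemma self_mul_cfc (f : ℝ → ℝ) : A * hA.cfc f = hA.cfc (id * f) := by
  rw [← hA.cfc_mul_cfc, hA.cfc_id]

lemma conjTranspose_cfc (f : ℝ → ℝ) : (hA.cfc f)ᴴ = hA.cfc f := by
  rw [← star_eq_conjTranspose, IsHermitian.cfc, ← map_star, star_eq_conjTranspose,
    diagonal_conjTranspose]
  congr 2
  ext i
  simp

lemma norm_cfc_le {f : ℝ → ℝ} {c : ℝ} (hc : 0 ≤ c) (h : ∀ i, |f (hA.eigenvalues i)| ≤ c) :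
    ‖hA.cfc f‖ ≤ c := by
  rw [IsHermitian.cfc, Unitary.conjStarAlgAut_apply, ← Unitary.coe_star,
    CStarRing.norm_mul_coe_unitary, CStarRing.norm_coe_unitary_mul, l2_opNorm_diagonal,
    pi_norm_le_iff_of_nonneg hc]
  intro i
  simpa using h i

end Matrix.IsHermitian

lemma Matrix.norm_apply_le_l2_opNorm {𝕜 : Type*} [RCLike 𝕜] {m : Type*} [Fintype m]
    (M : Matrix m n 𝕜) (i : m) (j : n) : ‖M i j‖ ≤ ‖M‖ := by
  have h := M.l2_opNorm_mulVec (EuclideanSpace.single j 1)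
  simp only [PiLp.norm_single, norm_one, mul_one] at h
  refine le_trans (le_of_eq ?_) ((PiLp.norm_apply_le _ i).trans h)
  simp

lemma Matrix.PosSemidef.norm_trace_mul_le {C P : Matrix n n ℂ} (hC : ‖C‖ ≤ 1)
    (hP : P.PosSemidef) : ‖(C * P).trace‖ ≤ P.trace.re := by
  set U := hP.1.eigenvectorUnitary
  have hU : ‖star (U : Matrix n n ℂ) * C * U‖ ≤ 1 := by
    rwa [CStarRing.norm_mul_coe_unitary, ← Unitary.coe_star, CStarRing.norm_coe_unitary_mul]
  have htr : (C * P).trace = ∑ i, (star (U : Matrix n n ℂ) * C * U) i i * hP.1.eigenvalues i := by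
    conv_lhs => rw [hP.1.spectral_theorem, Unitary.conjStarAlgAut_apply, ← mul_assoc,
      trace_mul_cycle, ← mul_assoc]
    simp [trace, mul_diagonal, U]
  rw [htr, hP.1.trace_eq_sum_eigenvalues, Complex.re_sum]
  refine (norm_sum_le _ _).trans (Finset.sum_le_sum fun i _ => ?_)
  simp only [Complex.norm_mul, Complex.norm_real, Real.norm_eq_abs,
    abs_of_nonneg (hP.eigenvalues_nonneg i), Complex.coe_algebraMap, Complex.ofReal_re]
  exact mul_le_of_le_one_left (hP.eigenvalues_nonneg i)
    ((norm_apply_le_l2_opNorm _ i i).trans hU)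

lemma Matrix.re_trace_conjTranspose_mul_self {m k : Type*} [Fintype m] [Fintype k]
    (A : Matrix m k ℂ) : (Aᴴ * A).trace.re = ∑ p : m × k, ‖A p.1 p.2‖ ^ 2 := by
  simp only [trace, diag, mul_apply, conjTranspose_apply, Complex.re_sum, Fintype.sum_prod_type]
  rw [Finset.sum_comm]
  refine Finset.sum_congr rfl fun k _ => Finset.sum_congr rfl fun i _ => ?_
  rw [RCLike.star_def, ← Complex.normSq_eq_conj_mul_self, Complex.ofReal_re, Complex.sq_norm]

theorem Matrix.norm_trace_conjTranspose_mul_le {m k : Type*} [Fintype m] [Fintype k]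
    (A B : Matrix m k ℂ) :
    ‖(Aᴴ * B).trace‖ ≤ √(Aᴴ * A).trace.re * √(Bᴴ * B).trace.re := by
  let vec (M : Matrix m k ℂ) : EuclideanSpace ℂ (m × k) := WithLp.toLp 2 fun p => M p.1 p.2
  have hinner : inner ℂ (vec A) (vec B) = (Aᴴ * B).trace := by
    simp only [PiLp.inner_apply, RCLike.inner_apply, trace, diag, mul_apply,
      conjTranspose_apply, Fintype.sum_prod_type, vec]
    rw [Finset.sum_comm]
    simp [mul_comm, RCLike.star_def]
  have hnorm (M : Matrix m k ℂ) : ‖vec M‖ = √(Mᴴ * M).trace.re := by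
    rw [EuclideanSpace.norm_eq, re_trace_conjTranspose_mul_self]
  rw [← hinner, ← hnorm, ← hnorm]
  exact norm_inner_le_norm _ _

lemma Matrix.trace_mul_mul_self_of_isIdempotentElem {R m : Type*} [CommSemiring R] [Fintype m]
    {P : Matrix m m R} (hP : IsIdempotentElem P) (A : Matrix m m R) :
    (P * A * P).trace = (P * A).trace := by
  rw [trace_mul_comm, ← mul_assoc, hP.eq]

lemma msqrt_eq_cfc {A : Matrix n n ℂ} (hA : A.PosSemidef) : msqrt A = hA.1.cfc Real.sqrt :=
  dif_pos hA

lemma posSemidef_msqrt {A : Matrix n n ℂ} (hA : A.PosSemidef) : (msqrt A).PosSemidef := by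
  rw [msqrt_eq_cfc hA, IsHermitian.cfc, Unitary.conjStarAlgAut_apply]
  exact (PosSemidef.diagonal fun i => by simp).mul_mul_conjTranspose_same _

lemma conjTranspose_msqrt {A : Matrix n n ℂ} (hA : A.PosSemidef) : (msqrt A)ᴴ = msqrt A :=
  (posSemidef_msqrt hA).1

lemma msqrt_mul_self {A : Matrix n n ℂ} (hA : A.PosSemidef) : msqrt A * msqrt A = A := by
  rw [msqrt_eq_cfc hA, hA.1.cfc_mul_cfc]
  conv_rhs => rw [← hA.1.cfc_id]
  exact hA.1.cfc_congr fun i => Real.mul_self_sqrt (hA.eigenvalues_nonneg i)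

lemma conjTranspose_mul_self_msqrt_mul {A P : Matrix n n ℂ} (hA : A.PosSemidef) (hP : Pᴴ = P) :
    (msqrt A * P)ᴴ * (msqrt A * P) = P * A * P := by
  rw [conjTranspose_mul, conjTranspose_msqrt hA, hP, mul_assoc, ← mul_assoc (msqrt A),
    msqrt_mul_self hA, ← mul_assoc]

theorem exists_polar_decomposition (X : Matrix n n ℂ) :
    ∃ W : Matrix n n ℂ, ‖W‖ ≤ 1 ∧ W * msqrt (Xᴴ * X) = X ∧ Wᴴ * X = msqrt (Xᴴ * X) := by
  have hH : (Xᴴ * X).PosSemidef := posSemidef_conjTranspose_mul_self X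
  -- `G` is the pseudo-inverse of `|X|`, thanks to the convention `0⁻¹ = 0`.
  set G := hH.1.cfc fun t => (√t)⁻¹
  have hG : Gᴴ = G := hH.1.conjTranspose_cfc _
  have hHE : Xᴴ * X * (G * msqrt (Xᴴ * X)) = Xᴴ * X := by
    rw [msqrt_eq_cfc hH, hH.1.cfc_mul_cfc, hH.1.self_mul_cfc]
    conv_rhs => rw [← hH.1.cfc_id]
    refine hH.1.cfc_congr fun i => ?_
    rcases (hH.eigenvalues_nonneg i).eq_or_lt with h | h
    · simp [← h]
    · simp [(Real.sqrt_pos.mpr h).ne']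
  refine ⟨X * G, ?_, ?_, ?_⟩
  · have hGHG : (X * G)ᴴ * (X * G) = hH.1.cfc fun t => (√t)⁻¹ * t * (√t)⁻¹ := by
      rw [conjTranspose_mul, hG, ← mul_assoc, mul_assoc G, hH.1.cfc_mul_self,
        hH.1.cfc_mul_cfc]
      rfl
    have : ‖X * G‖ * ‖X * G‖ ≤ 1 := by
      rw [← l2_opNorm_conjTranspose_mul_self, hGHG]
      refine hH.1.norm_cfc_le zero_le_one fun i => ?_
      rcases le_or_gt (hH.1.eigenvalues i) 0 with h | h
      · simp [Real.sqrt_eq_zero'.mpr h]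
      · rw [mul_right_comm, ← mul_inv, Real.mul_self_sqrt h.le, inv_mul_cancel₀ h.ne']
        simp
    nlinarith [norm_nonneg (X * G)]
  · have hXE : X * (G * msqrt (Xᴴ * X) - 1) = 0 := by
      rw [← conjTranspose_mul_self_eq_zero, conjTranspose_mul, mul_assoc, ← mul_assoc Xᴴ,
        mul_sub, hHE, mul_one, sub_self, mul_zero]
    rw [mul_sub, mul_one, sub_eq_zero] at hXE
    rw [mul_assoc, hXE]
  · rw [conjTranspose_mul, hG, mul_assoc, hH.1.cfc_mul_self, msqrt_eq_cfc hH]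
    exact hH.1.cfc_congr fun i => by simp [← div_eq_inv_mul, Real.div_sqrt]

lemma trNorm_eq_trace_msqrt (X : Matrix n n ℂ) : trNorm X = (msqrt (Xᴴ * X)).trace.re := by
  rw [trNorm, msqrt, dif_pos (posSemidef_conjTranspose_mul_self X)]

theorem norm_trace_mul_le_trNorm {C : Matrix n n ℂ} (hC : ‖C‖ ≤ 1) (X : Matrix n n ℂ) :
    ‖(C * X).trace‖ ≤ trNorm X := by
  obtain ⟨W, hW, hWX, -⟩ := exists_polar_decomposition X
  rw [trNorm_eq_trace_msqrt]
  conv_lhs => rw [← hWX, ← mul_assoc]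
  exact (posSemidef_msqrt (posSemidef_conjTranspose_mul_self X)).norm_trace_mul_le
    ((norm_mul_le _ _).trans (mul_le_one₀ hC (norm_nonneg _) hW))

theorem norm_trace_mul_mul_conjTranspose_le_trNorm {C : Matrix n n ℂ} (hC : ‖C‖ ≤ 1)
    (Y Z : Matrix n n ℂ) :
    ‖(C * (Y * Zᴴ)).trace‖ ≤ trNorm (msqrt (Yᴴ * Y) * msqrt (Zᴴ * Z)) := by
  obtain ⟨V, hV, hVY, -⟩ := exists_polar_decomposition Y
  obtain ⟨R, hR, hRZ, -⟩ := exists_polar_decomposition Z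
  have htr : (C * (Y * Zᴴ)).trace = (Rᴴ * C * V * (msqrt (Yᴴ * Y) * msqrt (Zᴴ * Z))).trace := by
    conv_lhs => rw [← hVY, ← hRZ]
    rw [conjTranspose_mul, conjTranspose_msqrt (posSemidef_conjTranspose_mul_self Z),
      ← mul_assoc, ← mul_assoc, ← mul_assoc, trace_mul_comm _ Rᴴ]
    simp only [mul_assoc]
  rw [htr]
  refine norm_trace_mul_le_trNorm ?_ _
  calc ‖Rᴴ * C * V‖ ≤ ‖Rᴴ‖ * ‖C‖ * ‖V‖ := norm_mul₃_le
    _ ≤ 1 := by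
      rw [l2_opNorm_conjTranspose]
      exact mul_le_one₀ (mul_le_one₀ hR (norm_nonneg _) hC) (norm_nonneg _) hV

theorem norm_trace_mul_mul_conjTranspose_le_sqrt {C : Matrix n n ℂ} (hC : ‖C‖ ≤ 1)
    (Y Z : Matrix n n ℂ) :
    ‖(C * (Y * Zᴴ)).trace‖ ≤ √(Yᴴ * Y).trace.re * √(Zᴴ * Z).trace.re := by
  have hCY : ((C * Y)ᴴ * (C * Y)).trace.re ≤ (Yᴴ * Y).trace.re := by
    have hCC : ‖Cᴴ * C‖ ≤ 1 := by
      rw [l2_opNorm_conjTranspose_mul_self]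
      exact mul_le_one₀ hC (norm_nonneg _) hC
    calc ((C * Y)ᴴ * (C * Y)).trace.re = (Cᴴ * C * (Y * Yᴴ)).trace.re := by
          rw [conjTranspose_mul, mul_assoc, trace_mul_comm]
          simp only [mul_assoc]
      _ ≤ ‖(Cᴴ * C * (Y * Yᴴ)).trace‖ := Complex.re_le_norm _
      _ ≤ (Y * Yᴴ).trace.re := (posSemidef_self_mul_conjTranspose Y).norm_trace_mul_le hCC
      _ = (Yᴴ * Y).trace.re := by rw [trace_mul_comm]
  calc ‖(C * (Y * Zᴴ)).trace‖ = ‖(Zᴴ * (C * Y)).trace‖ := by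
        rw [← mul_assoc, trace_mul_comm]
    _ ≤ √(Zᴴ * Z).trace.re * √((C * Y)ᴴ * (C * Y)).trace.re :=
        norm_trace_conjTranspose_mul_le _ _
    _ ≤ √(Yᴴ * Y).trace.re * √(Zᴴ * Z).trace.re := by
        rw [mul_comm]
        gcongr

lemma re_trace_mul_nonneg_of_isStarProjection {m : Type*} [Fintype m] {A P : Matrix m m ℂ}
    (hA : A.PosSemidef) (hP : IsStarProjection P) : 0 ≤ (P * A).trace.re := by
  have h := (hA.conjTranspose_mul_mul_same P).trace_nonneg
  rw [hP.isSelfAdjoint.isHermitian.eq,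
    trace_mul_mul_self_of_isIdempotentElem hP.isIdempotentElem] at h
  exact (Complex.nonneg_iff.mp h).1

theorem fid_le_fid_proj_add_sqrt {ρ σ P : Matrix n n ℂ} (hρ : ρ.PosSemidef) (hσ : σ.PosSemidef)
    (hP : IsStarProjection P) :
    fid ρ σ ≤ fid (P * ρ * P) (P * σ * P) +
      √(((1 - P) * ρ).trace.re * ((1 - P) * σ).trace.re) := by
  have hQ := hP.one_sub
  have hsplit : msqrt ρ * msqrt σ =
      msqrt ρ * P * (msqrt σ * P)ᴴ + msqrt ρ * (1 - P) * (msqrt σ * (1 - P))ᴴ := by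
    rw [conjTranspose_mul, conjTranspose_mul, hP.isSelfAdjoint.isHermitian.eq,
      hQ.isSelfAdjoint.isHermitian.eq, conjTranspose_msqrt hσ, mul_assoc, mul_assoc,
      ← mul_assoc P, ← mul_assoc (1 - P), hP.isIdempotentElem.eq, hQ.isIdempotentElem.eq,
      ← mul_add, ← add_mul, add_sub_cancel, one_mul]
  obtain ⟨W, hW, -, hWX⟩ := exists_polar_decomposition (msqrt ρ * msqrt σ)
  have hWh : ‖Wᴴ‖ ≤ 1 := by rwa [l2_opNorm_conjTranspose]
  have hproj := norm_trace_mul_mul_conjTranspose_le_trNorm hWh (msqrt ρ * P) (msqrt σ * P)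
  have hcompl := norm_trace_mul_mul_conjTranspose_le_sqrt hWh (msqrt ρ * (1 - P))
    (msqrt σ * (1 - P))
  rw [conjTranspose_mul_self_msqrt_mul hρ hP.isSelfAdjoint.isHermitian.eq,
    conjTranspose_mul_self_msqrt_mul hσ hP.isSelfAdjoint.isHermitian.eq] at hproj
  rw [conjTranspose_mul_self_msqrt_mul hρ hQ.isSelfAdjoint.isHermitian.eq,
    conjTranspose_mul_self_msqrt_mul hσ hQ.isSelfAdjoint.isHermitian.eq,
    trace_mul_mul_self_of_isIdempotentElem hQ.isIdempotentElem,
    trace_mul_mul_self_of_isIdempotentElem hQ.isIdempotentElem,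
    ← Real.sqrt_mul (re_trace_mul_nonneg_of_isStarProjection hρ hQ)] at hcompl
  rw [fid, trNorm_eq_trace_msqrt, ← hWX, hsplit, mul_add, trace_add, Complex.add_re]
  exact add_le_add ((Complex.re_le_norm _).trans hproj) ((Complex.re_le_norm _).trans hcompl)

lemma sqrt_mul_add_sqrt_mul_le {a b c d : ℝ} (ha : 0 ≤ a) (hb : 0 ≤ b) (hc : 0 ≤ c)
    (hd : 0 ≤ d) : √(a * b) + √(c * d) ≤ √((a + c) * (b + d)) := by
  have hcross : √(a * b) * √(c * d) = √(a * d) * √(b * c) := by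
    rw [← Real.sqrt_mul (by positivity), ← Real.sqrt_mul (by positivity)]
    ring_nf
  apply Real.le_sqrt_of_sq_le
  nlinarith [sq_nonneg (√(a * d) - √(b * c)), Real.sq_sqrt (mul_nonneg ha hb),
    Real.sq_sqrt (mul_nonneg hc hd), Real.sq_sqrt (mul_nonneg ha hd),
    Real.sq_sqrt (mul_nonneg hb hc)]

/-- Generalized fidelity does not decrease under projections:
`F(ΠρΠ, ΠσΠ) ≥ F(ρ,σ) − sqrt((1−Tr(Πρ))(1−Tr(Πσ)))`, the left side being the ordinary
fidelity `‖√(ΠρΠ)√(ΠσΠ)‖₁` of the projected operators and `F(ρ,σ)` the generalized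
fidelity. -/
theorem fid_proj_ge_gFid_sub {d : ℕ}
    (ρ σ Pj : Matrix (Fin d) (Fin d) ℂ) (hρ : IsSubState ρ) (hσ : IsSubState σ)
    (hproj : Pj * Pj = Pj) (hherm : Pjᴴ = Pj) :
    fid (Pj * ρ * Pj) (Pj * σ * Pj) ≥
      gFid ρ σ - Real.sqrt ((1 - ((Pj * ρ).trace).re) * (1 - ((Pj * σ).trace).re)) := by
  obtain ⟨hρ, hρ_le⟩ := hρ
  obtain ⟨hσ, hσ_le⟩ := hσ
  have hP : IsStarProjection Pj := ⟨hproj, hherm⟩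
  have hcompl (A : Matrix (Fin d) (Fin d) ℂ) :
      ((1 - Pj) * A).trace.re = A.trace.re - (Pj * A).trace.re := by
    rw [sub_mul, one_mul, trace_sub, Complex.sub_re]
  have hsqrt := sqrt_mul_add_sqrt_mul_le (sub_nonneg.mpr hρ_le) (sub_nonneg.mpr hσ_le)
    (re_trace_mul_nonneg_of_isStarProjection hρ hP.one_sub)
    (re_trace_mul_nonneg_of_isStarProjection hσ hP.one_sub)
  rw [hcompl, hcompl, sub_add_sub_cancel, sub_add_sub_cancel] at hsqrt
  have hfid := fid_le_fid_proj_add_sqrt hρ hσ hP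
  rw [hcompl, hcompl] at hfid
  rw [ge_iff_le, gFid]
  linarith
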